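/- arXiv:2303.08885 — 3 statements merged into one kernel-verified Lean document; each statement's English description precedes it below -/
import Mathlib

section
/- Consider the α = 0 system m·θ̈_i + ε·θ̇_i = (μ/3)·Σ_j sin(θ_j − θ_i) + (γ/18)·Σ_{j,k} sin(θ_j + θ_k − 2θ_i) with three oscillators. For a rigidly rotating 2+1 ansatz θ_1(t) = θ_2(t) = ω t, θ_3(t) = ω t + δ, the ansatz is a solution if and only if sin δ · (18μ + 8γ + 10γ·cos δ) = 0 and ε·ω = (μ/3)·sin δ + (γ/18)·(4·sin δ + sin 2δ). -/
open Real Filter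

noncomputable def kuraRHS (μ γ α : ℝ) (x : Fin 3 → ℝ) (i : Fin 3) : ℝ :=
  (μ / 3) * ∑ j, Real.sin (x j - x i - α)
    + (γ / 18) * ∑ j, ∑ k, Real.sin (x j + x k - 2 * x i - α)

def IsSolution (m ε μ γ α : ℝ) (θ : ℝ → Fin 3 → ℝ) : Prop :=
  ∀ (i : Fin 3) (t : ℝ),
    m * deriv (deriv fun s => θ s i) t + ε * deriv (fun s => θ s i) t
      = kuraRHS μ γ α (θ t) i

theorem two_plus_one_locked_iff (m ε μ γ ω δ : ℝ) (hm : 0 < m) (hε : 0 < ε) :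
    IsSolution m ε μ γ 0 (fun t => ![ω * t, ω * t, ω * t + δ]) ↔
      (Real.sin δ * (18 * μ + 8 * γ + 10 * γ * Real.cos δ) = 0 ∧
        ε * ω = (μ / 3) * Real.sin δ
          + (γ / 18) * (4 * Real.sin δ + Real.sin (2 * δ))) := by
  set θ : ℝ → Fin 3 → ℝ := fun t => ![ω * t, ω * t, ω * t + δ] with hθ
  have hd1 : ∀ (i : Fin 3) (t : ℝ), deriv (fun s => θ s i) t = ω := by
    intro i t
    fin_cases i <;>
      simp only [hθ, Matrix.cons_val_zero, Matrix.cons_val_one, Matrix.head_cons,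
        Matrix.cons_val_two, Matrix.tail_cons]
    · simpa using ((hasDerivAt_id t).const_mul ω).deriv
    · simpa using ((hasDerivAt_id t).const_mul ω).deriv
    · simpa using (((hasDerivAt_id t).const_mul ω).add_const δ).deriv
  have hd2 : ∀ (i : Fin 3) (t : ℝ), deriv (deriv fun s => θ s i) t = 0 := by
    intro i t
    have h : (deriv fun s => θ s i) = fun _ => ω := funext (hd1 i)
    rw [h]; exact deriv_const t ω
  have hsin2 : Real.sin (2 * δ) = 2 * Real.sin δ * Real.cos δ := Real.sin_two_mul δ
  have hR0 : ∀ t : ℝ, kuraRHS μ γ 0 (θ t) 0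
      = (μ / 3) * Real.sin δ + (γ / 18) * (4 * Real.sin δ + Real.sin (2 * δ)) := by
    intro t
    simp only [kuraRHS, Fin.sum_univ_three, hθ, Matrix.cons_val_zero, Matrix.cons_val_one,
      Matrix.head_cons, Matrix.cons_val_two, Matrix.tail_cons, sub_zero]
    ring_nf
    simp [Real.sin_zero, Real.sin_neg]
  have hR2 : ∀ t : ℝ, kuraRHS μ γ 0 (θ t) 2
      = -(2 * μ / 3) * Real.sin δ - (γ / 18) * (4 * Real.sin δ + 4 * Real.sin (2 * δ)) := by
    intro t
    simp only [kuraRHS, Fin.sum_univ_three, hθ, Matrix.cons_val_zero, Matrix.cons_val_one,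
      Matrix.head_cons, Matrix.cons_val_two, Matrix.tail_cons, sub_zero]
    ring_nf
    simp [Real.sin_zero, Real.sin_neg]
    ring
  have hR1 : ∀ t : ℝ, kuraRHS μ γ 0 (θ t) 1 = kuraRHS μ γ 0 (θ t) 0 := by
    intro t
    simp only [kuraRHS, Fin.sum_univ_three, hθ, Matrix.cons_val_zero, Matrix.cons_val_one,
      Matrix.head_cons, Matrix.cons_val_two, Matrix.tail_cons, sub_zero]
  constructor
  · intro h
    have h0 := h 0 0
    have h2 := h 2 0
    rw [hd1, hd2, hR0] at h0
    rw [hd1, hd2, hR2] at h2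
    constructor
    · linear_combination 18 * h2 - 18 * h0 - 5 * γ * hsin2
    · linarith [h0]
  · rintro ⟨h1, h2⟩
    intro i t
    rw [hd1, hd2]
    fin_cases i
    · show m * 0 + ε * ω = kuraRHS μ γ 0 (θ t) 0
      rw [hR0]; linarith
    · show m * 0 + ε * ω = kuraRHS μ γ 0 (θ t) 1
      rw [hR1, hR0]; linarith
    · show m * 0 + ε * ω = kuraRHS μ γ 0 (θ t) 2
      rw [hR2]
      linear_combination h2 + (1 / 18) * h1 + (5 * γ / 18) * hsin2
end

section
/- Let μ, γ be real with γ ≠ 0 and |18μ + 8γ| < 10|γ|. Then there exists δ ∈ (0, π) with cos δ = −(18μ + 8γ)/(10γ), and consequently (with ε > 0) a nonzero phase difference δ and ω = [(μ/3)·sin δ + (γ/18)·(4·sin δ + sin 2δ)]/ε such that θ_1 = θ_2 = ω t, θ_3 = ω t + δ is a rigidly rotating 2+1 phase-locked solution of the α = 0 three-oscillator Kuramoto system with inertia. -/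
open Real Filter

lemma deriv_lin (ω c : ℝ) : deriv (fun s : ℝ => ω * s + c) = fun _ => ω := by
  ext t
  have : HasDerivAt (fun s : ℝ => ω * s + c) ω t := by
    simpa using ((hasDerivAt_id t).const_mul ω).add_const c
  exact this.deriv

lemma deriv_lin' (ω : ℝ) : deriv (fun s : ℝ => ω * s) = fun _ => ω := by
  simpa using deriv_lin ω 0

theorem two_plus_one_locked_exists (m ε μ γ : ℝ) (hm : 0 < m) (hε : 0 < ε)
    (hγ : γ ≠ 0) (h : |18 * μ + 8 * γ| < 10 * |γ|) :
    ∃ δ ∈ Set.Ioo (0 : ℝ) π,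
      Real.cos δ = -(18 * μ + 8 * γ) / (10 * γ) ∧
      ∃ ω : ℝ,
        ω = ((μ / 3) * Real.sin δ
              + (γ / 18) * (4 * Real.sin δ + Real.sin (2 * δ))) / ε ∧
        IsSolution m ε μ γ 0 (fun t => ![ω * t, ω * t, ω * t + δ]) := by
  set c : ℝ := -(18 * μ + 8 * γ) / (10 * γ) with hc
  have hcabs : |c| < 1 := by
    rw [hc, abs_div, abs_neg, div_lt_one (by positivity)]
    calc |18 * μ + 8 * γ| < 10 * |γ| := h
    _ = |10 * γ| := by rw [abs_mul]; norm_num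
  have hc1 : c < 1 := lt_of_le_of_lt (le_abs_self c) hcabs
  have hc2 : -1 < c := by
    have := neg_lt_of_abs_lt hcabs; linarith
  have hcos : Real.cos (Real.arccos c) = c := Real.cos_arccos hc2.le hc1.le
  have hne : Real.arccos c ≠ π := by
    intro hp
    rw [hp, Real.cos_pi] at hcos
    linarith
  refine ⟨Real.arccos c, ⟨Real.arccos_pos.2 hc1,
    lt_of_le_of_ne (Real.arccos_le_pi c) hne⟩, hcos, ?_⟩
  set δ := Real.arccos c with hδ
  set ω : ℝ := ((μ / 3) * Real.sin δ
      + (γ / 18) * (4 * Real.sin δ + Real.sin (2 * δ))) / ε with hω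
  refine ⟨ω, rfl, ?_⟩
  have hs2 : Real.sin (2 * δ) = 2 * Real.sin δ * Real.cos δ := Real.sin_two_mul δ
  have hcc : 10 * γ * Real.cos δ = -(18 * μ + 8 * γ) := by
    rw [hcos, hc]; field_simp
  have key : μ * Real.sin δ + (γ / 18) * (8 * Real.sin δ + 5 * Real.sin (2 * δ)) = 0 := by
    rw [hs2]; linear_combination (Real.sin δ / 18) * hcc
  have hεω : ε * ω = (μ / 3) * Real.sin δ
      + (γ / 18) * (4 * Real.sin δ + Real.sin (2 * δ)) := by
    rw [hω, mul_div_cancel₀ _ hε.ne']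
  intro i t
  fin_cases i
  · have : (fun s : ℝ => ![ω * s, ω * s, ω * s + δ] (0 : Fin 3)) = fun s => ω * s := by
      funext s; simp
    rw [show ((⟨0, by norm_num⟩ : Fin 3)) = (0 : Fin 3) from rfl, this, deriv_lin' ω, deriv_const]
    simp only [kuraRHS, Fin.sum_univ_three, Matrix.cons_val_zero, Matrix.cons_val_one,
      Matrix.head_cons, Matrix.cons_val_two, Matrix.tail_cons]
    rw [show ω * t - ω * t - 0 = 0 by ring, show ω * t + δ - ω * t - 0 = δ by ring,
      show ω * t + ω * t - 2 * (ω * t) - 0 = 0 by ring,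
      show ω * t + (ω * t + δ) - 2 * (ω * t) - 0 = δ by ring,
      show ω * t + δ + ω * t - 2 * (ω * t) - 0 = δ by ring,
      show ω * t + δ + (ω * t + δ) - 2 * (ω * t) - 0 = 2 * δ by ring,
      Real.sin_zero]
    linarith [hεω]
  · have : (fun s : ℝ => ![ω * s, ω * s, ω * s + δ] (1 : Fin 3)) = fun s => ω * s := by
      funext s; simp
    rw [show ((⟨1, by norm_num⟩ : Fin 3)) = (1 : Fin 3) from rfl, this, deriv_lin' ω, deriv_const]
    simp only [kuraRHS, Fin.sum_univ_three, Matrix.cons_val_zero, Matrix.cons_val_one,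
      Matrix.head_cons, Matrix.cons_val_two, Matrix.tail_cons]
    rw [show ω * t - ω * t - 0 = 0 by ring, show ω * t + δ - ω * t - 0 = δ by ring,
      show ω * t + ω * t - 2 * (ω * t) - 0 = 0 by ring,
      show ω * t + (ω * t + δ) - 2 * (ω * t) - 0 = δ by ring,
      show ω * t + δ + ω * t - 2 * (ω * t) - 0 = δ by ring,
      show ω * t + δ + (ω * t + δ) - 2 * (ω * t) - 0 = 2 * δ by ring,
      Real.sin_zero]
    linarith [hεω]
  · have : (fun s : ℝ => ![ω * s, ω * s, ω * s + δ] (2 : Fin 3)) = fun s => ω * s + δ := by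
      funext s; simp
    rw [show ((⟨2, by norm_num⟩ : Fin 3)) = (2 : Fin 3) from rfl, this, deriv_lin ω δ, deriv_const]
    simp only [kuraRHS, Fin.sum_univ_three, Matrix.cons_val_zero, Matrix.cons_val_one,
      Matrix.head_cons, Matrix.cons_val_two, Matrix.tail_cons]
    rw [show ω * t - (ω * t + δ) - 0 = -δ by ring,
      show ω * t + δ - (ω * t + δ) - 0 = 0 by ring,
      show ω * t + ω * t - 2 * (ω * t + δ) - 0 = -(2 * δ) by ring,
      show ω * t + (ω * t + δ) - 2 * (ω * t + δ) - 0 = -δ by ring,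
      show ω * t + δ + ω * t - 2 * (ω * t + δ) - 0 = -δ by ring,
      show ω * t + δ + (ω * t + δ) - 2 * (ω * t + δ) - 0 = 0 by ring,
      Real.sin_zero, Real.sin_neg, Real.sin_neg]
    linarith [hεω, key]
end

section
/- In the α = 0 three-oscillator system, the family of 2+1 phase-locked states interpolates continuously between the antipodal fixed point and full synchrony: if δ = π, the consistency conditions force ω = 0 (the 2+1 antipodal equilibrium), and if δ = 0, they force the fully synchronized equilibrium; for δ ∈ (0, π) satisfying 10γ·cos δ = −(18μ + 8γ), the resulting ω is nonzero whenever (μ/3)·sin δ + (γ/18)·(4·sin δ + sin 2δ) ≠ 0. -/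
open Real

theorem two_plus_one_interpolation (μ γ ε : ℝ) (hε : 0 < ε) :
    (∀ ω δ : ℝ, δ = π →
        Real.sin δ * (18 * μ + 8 * γ + 10 * γ * Real.cos δ) = 0 →
        ε * ω = (μ / 3) * Real.sin δ
          + (γ / 18) * (4 * Real.sin δ + Real.sin (2 * δ)) →
        ω = 0) ∧
    (∀ ω δ : ℝ, δ = 0 →
        Real.sin δ * (18 * μ + 8 * γ + 10 * γ * Real.cos δ) = 0 →
        ε * ω = (μ / 3) * Real.sin δ
          + (γ / 18) * (4 * Real.sin δ + Real.sin (2 * δ)) →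
        ω = 0) ∧
    (∀ ω δ : ℝ, δ ∈ Set.Ioo (0 : ℝ) π →
        10 * γ * Real.cos δ = -(18 * μ + 8 * γ) →
        ε * ω = (μ / 3) * Real.sin δ
          + (γ / 18) * (4 * Real.sin δ + Real.sin (2 * δ)) →
        (μ / 3) * Real.sin δ
          + (γ / 18) * (4 * Real.sin δ + Real.sin (2 * δ)) ≠ 0 →
        ω ≠ 0) := by
  refine ⟨?_, ?_, ?_⟩
  · intro ω δ hδ _ h3
    subst hδ
    have h2 : Real.sin (2 * π) = 0 := by
      rw [Real.sin_eq_zero_iff]; exact ⟨2, by ring⟩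
    rw [Real.sin_pi, h2] at h3
    have : ε * ω = 0 := by linarith
    exact (mul_eq_zero.mp this).resolve_left (ne_of_gt hε)
  · intro ω δ hδ _ h3
    subst hδ
    simp at h3
    exact h3.resolve_left (ne_of_gt hε)
  · intro ω δ _ _ h3 h4
    intro hω
    apply h4
    rw [← h3, hω, mul_zero]
end
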